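/- For every integer M ≥ 1 and every integer n with N_K ≤ n ≤ (M − 1)·N_K, one has (M − 1)! · f_M(n) ≥ (N_K + 1)^{M−1}; in particular f_M(n) ≥ f_M(N_K) = C(N_K + M − 1, M − 1) ≥ (N_K + 1)^{M−1}/(M − 1)! on this central plateau. -/

import Mathlib

/-- The number of `M`-tuples `(n_1, …, n_M)` with each `n_i ∈ {0, …, NK}`
and `n_1 + ⋯ + n_M = n`. -/
def f (NK M : ℕ) (n : ℤ) : ℕ :=
  (Finset.univ.filter
    (fun t : Fin M → Fin (NK + 1) => (∑ i, ((t i : ℕ) : ℤ)) = n)).card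

/-!
Splitting off the first coordinate gives `f_{M+1}(n) = ∑_{k=0}^{N_K} f_M(n - k)`, which telescopes
to the Pascal-type identity `f_{M+1}(p+1) + f_M(p - N_K) = f_{M+1}(p) + f_M(p+1)`. Below `N_K` the
term `f_M(p - N_K)` vanishes, so `f_M` agrees there with the multiset coefficient; in general, the
symmetry `f_M(M N_K - n) = f_M(n)` (reflect every coordinate) shows `f_M(p - N_K) ≤ f_M(p+1)` when
`2(p+1) ≤ (M+1) N_K`, so `f_{M+1}` increases up to the middle. Hence `f_M(N_K)` is the minimum on
the plateau, and `(M-1)! C(N_K + M - 1, M - 1) = (N_K+1)(N_K+2)⋯(N_K+M-1) ≥ (N_K+1)^{M-1}`.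
-/

lemma f_zero (NK : ℕ) (n : ℤ) : f NK 0 n = if n = 0 then 1 else 0 := by
  rcases eq_or_ne n 0 with h | h <;> simp [f, h, eq_comm]

lemma f_of_neg (NK M : ℕ) {n : ℤ} (hn : n < 0) : f NK M n = 0 := by
  refine Finset.card_eq_zero.2 <| Finset.filter_eq_empty_iff.2 fun t _ hsum => ?_
  have : (0 : ℤ) ≤ ∑ i, ((t i : ℕ) : ℤ) := Finset.sum_nonneg fun i _ => by positivity
  omega

lemma f_succ (NK M : ℕ) (n : ℤ) :
    f NK (M + 1) n = ∑ k ∈ Finset.range (NK + 1), f NK M (n - k) := by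
  simp only [f, Finset.card_filter]
  rw [← (Fin.consEquiv fun _ => Fin (NK + 1)).sum_comp, Fintype.sum_prod_type,
    ← Fin.sum_univ_eq_sum_range]
  refine Fintype.sum_congr _ _ fun k => Fintype.sum_congr _ _ fun s => ?_
  simp [Fin.sum_univ_succ, eq_sub_iff_add_eq, add_comm]

lemma sum_val_rev (NK M : ℕ) (t : Fin M → Fin (NK + 1)) :
    ∑ i, (((t i).rev : ℕ) : ℤ) = M * NK - ∑ i, ((t i : ℕ) : ℤ) := by
  have h i : (((t i).rev : ℕ) : ℤ) = NK - (t i : ℕ) := by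
    have := (t i).isLt
    rw [Fin.val_rev]; omega
  rw [Finset.sum_congr rfl fun i _ => h i, Finset.sum_sub_distrib]
  simp [mul_comm]

lemma f_mul_sub (NK M : ℕ) (n : ℤ) : f NK M (M * NK - n) = f NK M n := by
  refine Finset.card_equiv (Equiv.piCongrRight fun _ => Fin.revPerm) fun t => ?_
  simp only [Finset.mem_filter, Finset.mem_univ, true_and, Equiv.piCongrRight_apply,
    Pi.map_apply, Fin.revPerm_apply, sum_val_rev]
  omega

lemma f_succ_add_one_add_f_sub (NK M : ℕ) (p : ℤ) :
    f NK (M + 1) (p + 1) + f NK M (p - NK) = f NK (M + 1) p + f NK M (p + 1) := by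
  rw [f_succ, f_succ, Finset.sum_range_succ', Finset.sum_range_succ]
  simp only [Nat.cast_add, Nat.cast_one, add_sub_add_right_eq_sub, Nat.cast_zero, sub_zero]
  ring

lemma f_eq_multichoose (NK M : ℕ) {j : ℕ} (hj : j ≤ NK) : f NK M j = M.multichoose j := by
  induction M generalizing j with
  | zero =>
    cases j <;> simp [f_zero]
    omega
  | succ M ihM =>
    induction j with
    | zero =>
      have h := f_succ_add_one_add_f_sub NK M (-1)
      rw [f_of_neg NK M (n := -1 - NK) (by omega), f_of_neg NK (M + 1) (n := -1) (by norm_num)]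
        at h
      simp only [neg_add_cancel, add_zero] at h
      simpa [h] using ihM (Nat.zero_le NK)
    | succ j ihj =>
      have h := f_succ_add_one_add_f_sub NK M j
      have hM := ihM hj
      rw [f_of_neg NK M (by omega), ihj (by omega)] at h
      push_cast at hM ⊢
      rw [Nat.multichoose_succ_succ]
      omega

lemma f_monotoneOn (NK M : ℕ) : MonotoneOn (f NK M) {n | 2 * n ≤ M * NK} := by
  induction M with
  | zero =>
    intro a _ b hb hab
    simp only [Set.mem_ofPred_eq, CharP.cast_eq_zero, zero_mul] at hb
    simp only [f_zero]
    split_ifs <;> omega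
  | succ M ihM =>
    have hconn : Set.OrdConnected {n : ℤ | 2 * n ≤ (M + 1 : ℕ) * NK} :=
      ⟨fun _ _ _ hb _ hn => (mul_le_mul_of_nonneg_left hn.2 zero_le_two).trans hb⟩
    refine monotoneOn_of_le_add_one hconn fun p _ _ hp => ?_
    simp only [Set.mem_ofPred_eq, Nat.cast_add, Nat.cast_one] at hp
    suffices f NK M (p - NK) ≤ f NK M (p + 1) by
      have := f_succ_add_one_add_f_sub NK M p
      omega
    by_cases hle : 2 * (p + 1) ≤ M * NK
    · exact ihM (by simp only [Set.mem_ofPred_eq]; linarith) hle (by omega)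
    · rw [← f_mul_sub NK M (p + 1)]
      exact ihM (by simp only [Set.mem_ofPred_eq]; linarith)
        (by simp only [Set.mem_ofPred_eq]; linarith) (by linarith)

lemma f_le_f_of_mem_plateau (NK M : ℕ) {n : ℤ} (hn0 : (NK : ℤ) ≤ n)
    (hnK : n ≤ ((M : ℤ) - 1) * NK) : f NK M NK ≤ f NK M n := by
  have hmem : (NK : ℤ) ∈ {n : ℤ | 2 * n ≤ M * NK} := by
    simp only [Set.mem_ofPred_eq]; linarith
  by_cases hn : 2 * n ≤ M * NK
  · exact f_monotoneOn NK M hmem hn hn0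
  · rw [← f_mul_sub NK M n]
    exact f_monotoneOn NK M hmem (by simp only [Set.mem_ofPred_eq]; linarith) (by linarith)

lemma pow_le_factorial_mul_choose (a m : ℕ) : (a + 1) ^ m ≤ m.factorial * (a + m).choose m :=
  Nat.ascFactorial_eq_factorial_mul_choose a m ▸ Nat.pow_succ_le_ascFactorial (a + 1) m

theorem stmt7_general (NK : ℕ) (M : ℕ) (hM : 1 ≤ M)
    (n : ℤ) (hn0 : (NK : ℤ) ≤ n) (hnK : n ≤ ((M : ℤ) - 1) * NK) :
    ((NK + 1) ^ (M - 1) ≤ Nat.factorial (M - 1) * f NK M n) ∧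
    f NK M (NK : ℤ) ≤ f NK M n ∧
    f NK M (NK : ℤ) = Nat.choose (NK + M - 1) (M - 1) ∧
    (NK + 1) ^ (M - 1) ≤ Nat.factorial (M - 1) * Nat.choose (NK + M - 1) (M - 1) := by
  obtain ⟨m, rfl⟩ : ∃ m, M = m + 1 := ⟨M - 1, by omega⟩
  rw [Nat.add_sub_cancel, ← Nat.add_assoc, Nat.add_sub_cancel]
  have hplateau := f_le_f_of_mem_plateau NK (m + 1) hn0 hnK
  have hchoose : f NK (m + 1) NK = (NK + m).choose m := by
    rw [f_eq_multichoose NK (m + 1) le_rfl, Nat.multichoose_eq,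
      show m + 1 + NK - 1 = NK + m by omega, Nat.choose_symm_add]
  have hbound := pow_le_factorial_mul_choose NK m
  refine ⟨?_, hplateau, hchoose, hbound⟩
  calc (NK + 1) ^ m ≤ m.factorial * f NK (m + 1) NK := hchoose ▸ hbound
    _ ≤ m.factorial * f NK (m + 1) n := Nat.mul_le_mul_left _ hplateau

/-- On the central plateau `N_K ≤ n ≤ (M−1)·N_K`, `(M−1)! · f_M(n) ≥ (N_K+1)^(M−1)`;
in particular `f_M(n) ≥ f_M(N_K) = C(N_K + M − 1, M − 1)` and
`(M−1)! · C(N_K + M − 1, M − 1) ≥ (N_K+1)^(M−1)`. -/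
theorem stmt7 (NK : ℕ) (hNK : 0 < NK) (M : ℕ) (hM : 1 ≤ M)
    (n : ℤ) (hn0 : (NK : ℤ) ≤ n) (hnK : n ≤ ((M : ℤ) - 1) * NK) :
    ((NK + 1) ^ (M - 1) ≤ Nat.factorial (M - 1) * f NK M n) ∧
    f NK M (NK : ℤ) ≤ f NK M n ∧
    f NK M (NK : ℤ) = Nat.choose (NK + M - 1) (M - 1) ∧
    (NK + 1) ^ (M - 1) ≤ Nat.factorial (M - 1) * Nat.choose (NK + M - 1) (M - 1) :=
  stmt7_general NK M hM n hn0 hnK
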